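/- arXiv:2210.09689 — 2 statements merged into one kernel-verified Lean document; each statement's English description precedes it below -/
import Mathlib

section
/- If two oriented flat-virtual link diagrams D and D' differ by a flat second Reidemeister move, then X(D) = X(D'). Specifically, the move changes by 2 the number of flat crossings on one or two components of each smoothed diagram D_s, so the parity of the number of flat crossings on each component is unchanged, and the state-sum expressions for X(D) and X(D') coincide. -/
/-!  Combinatorial (Gauss-diagram style) model of oriented flat-virtual link diagrams.

A flat-virtual link diagram is a four-valent graph each of whose vertices (crossings) is
classical, flat, or virtual.  Following Bar-Natan's point of view, a diagram is encoded by
its list of crossings together with the way the four half-edge slots of the crossings are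
connected to each other by strands.  At every crossing the four half-edge slots are
numbered by `Fin 4` in counterclockwise order, opposite slots (`i` and `i + 2`) belonging
to the same strand; at a *classical* crossing, by convention, the strand through the
slots `0, 2` is the overcrossing strand.  The field `loops` records the number of
crossing-free circle components.  Diagrams are oriented: `dir h = true` means that the
strand is directed out of the crossing at the slot `h`. -/

/-- Kinds of vertices (crossings) of a flat-virtual link diagram. -/
inductive VertexKind : Type
  | classical : VertexKind
  | flat : VertexKind
  | virt : VertexKind
  deriving DecidableEq

/-- A combinatorial oriented flat-virtual link diagram. -/
structure FVDiagram : Type where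
  /-- the number of crossings -/
  n : ℕ
  /-- the number of crossing-free circle components -/
  loops : ℕ
  /-- the kind of each crossing -/
  kind : Fin n → VertexKind
  /-- the matching of half-edge slots by edges -/
  pair : Fin n × Fin 4 → Fin n × Fin 4
  pair_invol : ∀ h, pair (pair h) = h
  pair_ne : ∀ h, pair h ≠ h
  /-- orientation: `dir h = true` iff the strand exits the crossing at slot `h` -/
  dir : Fin n × Fin 4 → Bool
  dir_pair : ∀ h, dir (pair h) = ! dir h
  dir_opp : ∀ h : Fin n × Fin 4, dir (h.1, h.2 + 2) = ! dir h

/-- Half-edge slots of a diagram. -/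
abbrev HE (D : FVDiagram) := Fin D.n × Fin 4

/-- The opposite slot at the same crossing (same strand, other side). -/
def opp {D : FVDiagram} (h : HE D) : HE D := (h.1, h.2 + 2)

/-- Strand traversal: from an arrival half-edge, pass straight through the crossing
and follow the next edge to the next arrival half-edge. -/
def trav (D : FVDiagram) (h : HE D) : HE D := D.pair (opp h)

/-- Number of orbits of a self-map (the quotient identifies `x` with `f x`). -/
noncomputable def orbitCount {α : Type*} (f : α → α) : ℕ :=
  Nat.card (Quot fun x y => f x = y)

/-- The number of unicursal components of a flat-virtual link diagram: each circle
component yields exactly two directed traversal orbits. -/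
noncomputable def components (D : FVDiagram) : ℕ :=
  orbitCount (trav D) / 2 + D.loops

/-- `Skip D S h h'` means: starting from the departure half-edge `h` and following the
strand, passing straight through every crossing belonging to `S`, one arrives at `h'`. -/
inductive Skip (D : FVDiagram) (S : Set (Fin D.n)) : HE D → HE D → Prop
  | base (h : HE D) : Skip D S h (D.pair h)
  | step {h h' : HE D} : Skip D S h h' → h'.1 ∈ S → Skip D S h (D.pair (opp h'))

/-- Half-edges whose whole traversal orbit stays inside the crossing set `S`. -/
def ClosedIn (D : FVDiagram) (S : Set (Fin D.n)) : Set (HE D) :=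
  {h | ∀ k : ℕ, ((trav D)^[k] h).1 ∈ S}

/-- The number of circle components running only through crossings of `S`. -/
noncomputable def hiddenLoops (D : FVDiagram) (S : Set (Fin D.n)) : ℕ :=
  Nat.card (Quot fun h h' : ClosedIn D S => trav D h.1 = h'.1) / 2

/-- `RemovalIso D D' S` witnesses that `D` is the diagram obtained from `D'` by deleting
the crossings of `S` and joining the strands straight through them. -/
structure RemovalIso (D D' : FVDiagram) (S : Set (Fin D'.n)) where
  toFun : Fin D.n → Fin D'.n
  inj : Function.Injective toFun
  notMem : ∀ v, toFun v ∉ S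
  surj : ∀ v' : Fin D'.n, v' ∉ S → ∃ v, toFun v = v'
  kind_eq : ∀ v, D'.kind (toFun v) = D.kind v
  dir_eq : ∀ v i, D'.dir (toFun v, i) = D.dir (v, i)
  conn : ∀ h : HE D, Skip D' S (toFun h.1, h.2) (toFun (D.pair h).1, (D.pair h).2)
  loops_eq : D.loops = D'.loops + hiddenLoops D' S

/-- First (classical) Reidemeister move: `D'` is obtained from `D` by adding a kink with a
classical crossing `u` (a loop edge joining two adjacent slots of `u`). -/
def MoveR1 (D D' : FVDiagram) : Prop :=
  ∃ u : Fin D'.n, D'.kind u = VertexKind.classical ∧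
    (∃ i : Fin 4, D'.pair (u, i) = (u, i + 1)) ∧
    Nonempty (RemovalIso D D' {u})

/-- Second (classical) Reidemeister move: `D'` is obtained from `D` by pushing one strand
over another, creating a bigon with two classical crossings `u`, `v`; the overcrossing
strand (slots of even parity) is the same at both crossings. -/
def MoveR2 (D D' : FVDiagram) : Prop :=
  ∃ u v : Fin D'.n, u ≠ v ∧
    D'.kind u = VertexKind.classical ∧ D'.kind v = VertexKind.classical ∧
    (∃ p q : Fin 4, (p : ℕ) % 2 = (q : ℕ) % 2 ∧ D'.pair (u, p) = (v, q) ∧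
      (D'.pair (u, p + 1) = (v, q + 3) ∨ D'.pair (u, p + 3) = (v, q + 1))) ∧
    Nonempty (RemovalIso D D' {u, v})

/-- Flat first Reidemeister move (used for flat links). -/
def MoveFlatR1 (D D' : FVDiagram) : Prop :=
  ∃ u : Fin D'.n, D'.kind u = VertexKind.flat ∧
    (∃ i : Fin 4, D'.pair (u, i) = (u, i + 1)) ∧
    Nonempty (RemovalIso D D' {u})

/-- Flat second Reidemeister move: `D'` is obtained from `D` by creating a bigon with two
flat crossings `u`, `v`. -/
def MoveFlatR2 (D D' : FVDiagram) : Prop :=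
  ∃ u v : Fin D'.n, u ≠ v ∧
    D'.kind u = VertexKind.flat ∧ D'.kind v = VertexKind.flat ∧
    (∃ p q : Fin 4, D'.pair (u, p) = (v, q) ∧
      (D'.pair (u, p + 1) = (v, q + 3) ∨ D'.pair (u, p + 3) = (v, q + 1))) ∧
    Nonempty (RemovalIso D D' {u, v})

/-- Data of a third Reidemeister move: the strand `ℓ` through the crossings `v` and `u`
slides across the crossing `w`.  Before the move the triangle has sides
`(w,c)–(v,e)`, `(w,d)–(u,g)`, `(v,f+2)–(u,h)`; after the move the cyclic order of the
crossings along the two strands through `w` is interchanged, everything else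
(kinds, orientations, and all other edges) being kept. -/
structure R3Data (D D' : FVDiagram) where
  β : Fin D.n ≃ Fin D'.n
  kind_eq : ∀ x, D'.kind (β x) = D.kind x
  dir_eq : ∀ x (i : Fin 4), D'.dir (β x, i) = D.dir (x, i)
  u : Fin D.n
  v : Fin D.n
  w : Fin D.n
  huv : u ≠ v
  huw : u ≠ w
  hvw : v ≠ w
  c : Fin 4
  d : Fin 4
  e : Fin 4
  f : Fin 4
  g : Fin 4
  h : Fin 4
  hcd : d ≠ c ∧ d ≠ c + 2
  t1 : D.pair (w, c) = (v, e)
  t2 : D.pair (w, d) = (u, g)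
  t3 : D.pair (v, f + 2) = (u, h)
  ε : Fin 4
  hε : ε = 1 ∨ ε = 3
  he1 : f + 2 = e + ε
  he2 : g = h + ε
  he3 : c = d + ε
  a1 : D'.pair (β w, c) = (β (D.pair (v, e + 2)).1, (D.pair (v, e + 2)).2)
  a2 : D'.pair (β v, e + 2) = (β w, c + 2)
  a3 : D'.pair (β v, e) = (β (D.pair (w, c + 2)).1, (D.pair (w, c + 2)).2)
  a4 : D'.pair (β u, g) = (β (D.pair (w, d + 2)).1, (D.pair (w, d + 2)).2)
  a5 : D'.pair (β u, g + 2) = (β w, d + 2)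
  a6 : D'.pair (β w, d) = (β (D.pair (u, g + 2)).1, (D.pair (u, g + 2)).2)
  outside : ∀ x : HE D,
    x ∉ ({(w, c), (w, c + 2), (w, d), (w, d + 2), (v, e), (v, e + 2), (u, g), (u, g + 2),
          D.pair (w, c + 2), D.pair (v, e + 2), D.pair (w, d + 2), D.pair (u, g + 2)} :
            Set (HE D)) →
    D'.pair (β x.1, x.2) = (β (D.pair x).1, (D.pair x).2)

/-- Classical third Reidemeister move: all three crossings are classical and the sliding
strand passes either over or under both of the other two strands. -/
def MoveClassicalR3 (D D' : FVDiagram) : Prop :=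
  ∃ T : R3Data D D', D.kind T.u = VertexKind.classical ∧ D.kind T.v = VertexKind.classical ∧
    D.kind T.w = VertexKind.classical ∧ (Even (T.f : ℕ) ↔ Even (T.h : ℕ))

/-- Flat third Reidemeister move: all three crossings are flat. -/
def MoveFlatR3 (D D' : FVDiagram) : Prop :=
  ∃ T : R3Data D D', D.kind T.u = VertexKind.flat ∧ D.kind T.v = VertexKind.flat ∧
    D.kind T.w = VertexKind.flat

/-- Mixed flat-classical third Reidemeister move: a strand containing two consecutive flat
crossings passes through a classical crossing (whose over/under structure is preserved). -/
def MoveMixedR3 (D D' : FVDiagram) : Prop :=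
  ∃ T : R3Data D D', D.kind T.u = VertexKind.flat ∧ D.kind T.v = VertexKind.flat ∧
    D.kind T.w = VertexKind.classical

/-- The set of virtual crossings of a diagram. -/
def virtualSet (D : FVDiagram) : Set (Fin D.n) := {v | D.kind v = VertexKind.virt}

/-- Virtual detour move: `D` and `D'` have a common underlying diagram (`core`) once all
virtual crossings are disregarded; i.e. a strand containing only virtual crossings can be
removed and replaced by any strand with the same endpoints whose new intersections are all
virtual. -/
def MoveDetour (D D' : FVDiagram) : Prop :=
  ∃ C : FVDiagram, (∀ v, C.kind v ≠ VertexKind.virt) ∧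
    Nonempty (RemovalIso C D (virtualSet D)) ∧ Nonempty (RemovalIso C D' (virtualSet D'))

/-- Classical Reidemeister moves (affecting only classical crossings). -/
def ClassicalMove (D D' : FVDiagram) : Prop :=
  MoveR1 D D' ∨ MoveR1 D' D ∨ MoveR2 D D' ∨ MoveR2 D' D ∨
    MoveClassicalR3 D D' ∨ MoveClassicalR3 D' D

/-- Flat Reidemeister moves (second and third, affecting only flat crossings). -/
def FlatMove (D D' : FVDiagram) : Prop :=
  MoveFlatR2 D D' ∨ MoveFlatR2 D' D ∨ MoveFlatR3 D D' ∨ MoveFlatR3 D' D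

/-- The mixed flat-classical third Reidemeister move (either direction). -/
def MixedMove (D D' : FVDiagram) : Prop :=
  MoveMixedR3 D D' ∨ MoveMixedR3 D' D

/-- A single flat-virtual Reidemeister move. -/
def FVMove (D D' : FVDiagram) : Prop :=
  ClassicalMove D D' ∨ FlatMove D D' ∨ MixedMove D D' ∨ MoveDetour D D'

/-- Equivalence of flat-virtual link diagrams: two diagrams represent the same
flat-virtual link iff they are related by a finite sequence of flat-virtual
Reidemeister moves. -/
def FVEquiv : FVDiagram → FVDiagram → Prop := Relation.ReflTransGen FVMove

/-- A single restricted flat-virtual move: the third Reidemeister move with three flat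
crossings is forbidden. -/
def RestrictedMove (D D' : FVDiagram) : Prop :=
  ClassicalMove D D' ∨ MoveFlatR2 D D' ∨ MoveFlatR2 D' D ∨ MixedMove D D' ∨ MoveDetour D D'

/-- Equivalence of diagrams as restricted flat-virtual links. -/
def RestrictedEquiv : FVDiagram → FVDiagram → Prop := Relation.ReflTransGen RestrictedMove
/-! ### The flat-virtual Jones polynomial -/

/-- A state of a diagram: a choice of `0`-smoothing (`false`) or `1`-smoothing (`true`)
at every classical crossing. -/
abbrev State (D : FVDiagram) :=
  {v : Fin D.n // D.kind v = VertexKind.classical} → Bool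

/-- The slot involution describing a smoothing of a classical crossing: the `0`-smoothing
(`A`-smoothing) joins slot `0` to slot `3` and slot `1` to slot `2`; the `1`-smoothing
joins slot `0` to slot `1` and slot `2` to slot `3`. -/
def smoothSlot (b : Bool) : Fin 4 → Fin 4 :=
  if b then ![1, 0, 3, 2] else ![3, 2, 1, 0]

/-- The half-edge at which the strand arriving at `h` leaves its crossing in the smoothed
diagram `D_s`: classical crossings are smoothed according to the state, flat and virtual
crossings are traversed straight. -/
def exitSlot (D : FVDiagram) (s : State D) (h : HE D) : HE D :=
  if hc : D.kind h.1 = VertexKind.classical then (h.1, smoothSlot (s ⟨h.1, hc⟩) h.2)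
  else opp h

/-- Traversal of the smoothed diagram `D_s`. -/
def travS (D : FVDiagram) (s : State D) (h : HE D) : HE D := D.pair (exitSlot D s h)

/-- The number of flat crossings lying on a given component of the smoothed diagram `D_s`
(a flat self-crossing of the component is counted only once). -/
noncomputable def flatCount (D : FVDiagram) (s : State D)
    (c : Quot fun x y : HE D => travS D s x = y) : ℕ :=
  Nat.card {v : Fin D.n // D.kind v = VertexKind.flat ∧
    ∃ i : Fin 4, Quot.mk (fun x y : HE D => travS D s x = y) (v, i) = c}

/-- `γ_even`: the number of components of the smoothed diagram `D_s` carrying an even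
number of flat crossings (each geometric component corresponds to two traversal orbits;
crossing-free circle components carry no flat crossing). -/
noncomputable def gammaEven (D : FVDiagram) (s : State D) : ℕ :=
  Nat.card {c : Quot fun x y : HE D => travS D s x = y // Even (flatCount D s c)} / 2
    + D.loops

/-- `γ_odd`: the number of components of the smoothed diagram `D_s` carrying an odd
number of flat crossings. -/
noncomputable def gammaOdd (D : FVDiagram) (s : State D) : ℕ :=
  Nat.card {c : Quot fun x y : HE D => travS D s x = y // ¬ Even (flatCount D s c)} / 2

/-- `α(s)`: the number of `0`-smoothed classical crossings. -/
noncomputable def alphaS (D : FVDiagram) (s : State D) : ℕ :=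
  Nat.card {c : {v : Fin D.n // D.kind v = VertexKind.classical} // s c = false}

/-- `β(s)`: the number of `1`-smoothed classical crossings. -/
noncomputable def betaS (D : FVDiagram) (s : State D) : ℕ :=
  Nat.card {c : {v : Fin D.n // D.kind v = VertexKind.classical} // s c = true}

/-- The sign (writhe contribution) of a crossing, computed from the orientation; with the
counterclockwise slot convention the sign is `+1` iff the outgoing under-strand slot
immediately follows the outgoing over-strand slot. -/
def crossSign (D : FVDiagram) (v : Fin D.n) : ℤ :=
  if (if D.dir (v, 1) then (1 : Fin 4) else 3) = (if D.dir (v, 0) then (0 : Fin 4) else 2) + 1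
    then 1 else -1

/-- The writhe of an oriented diagram: the sum of the signs of its classical crossings. -/
def writhe (D : FVDiagram) : ℤ :=
  ∑ v ∈ Finset.univ.filter (fun v => D.kind v = VertexKind.classical), crossSign D v

/-- The coefficient ring `ℤ[a, a⁻¹, b]`: polynomials in `b` over Laurent polynomials
in `a`. -/
abbrev LPRing : Type := Polynomial (LaurentPolynomial ℤ)

/-- The (invertible) variable `a` raised to the integer power `k`. -/
noncomputable def Av (k : ℤ) : LPRing := Polynomial.C (LaurentPolynomial.T k)

/-- The variable `b`. -/
noncomputable def bv : LPRing := Polynomial.X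

/-- The flat-virtual Jones polynomial
`X(D) = (−a)^{−3w(D)} ∑_s a^{α(s)−β(s)} (−a²−a⁻²)^{γ_even(s)} b^{γ_odd(s)}`. -/
noncomputable def Xpoly (D : FVDiagram) : LPRing :=
  ((((-3 * writhe D).negOnePow : ℤˣ) : ℤ) • Av (-3 * writhe D)) *
    ∑ s : State D,
      Av ((alphaS D s : ℤ) - (betaS D s : ℤ)) * (-Av 2 - Av (-2)) ^ gammaEven D s *
        bv ^ gammaOdd D s
/-- Transport of a state along the crossing correspondence of a `RemovalIso` (the
classical crossings of the two diagrams are in canonical bijection). -/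
def RemovalIso.pullState {D D' : FVDiagram} {S : Set (Fin D'.n)}
    (ι : RemovalIso D D' S) (s' : State D') : State D :=
  fun c => s' ⟨ι.toFun c.1, (ι.kind_eq c.1).trans c.2⟩

/-- Transport of a state along the crossing correspondence of an `R3Data`. -/
def R3Data.pullState {D D' : FVDiagram} (T : R3Data D D') (s' : State D') : State D :=
  fun c => s' ⟨T.β c.1, (T.kind_eq c.1).trans c.2⟩

/-! Removing a set `S` of flat crossings from `D'` leaves the classical crossings, hence the
states, `α`, `β` and the writhe, untouched. In a smoothing, a component of `D'_s` either leaves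
`S`, and then is a component of `D_s` with the crossings of `S` inserted, or runs only through
`S`, and then is one of the circles which `D` records in `loops`. So `γ_even` and `γ_odd` agree
as soon as every component visits an even number of crossings of `S`. For the bigon of a flat
second Reidemeister move this holds because a component through one of its two crossings also
passes through the other. -/

open Function Relation

section

variable {α : Type*}

theorem eqvGen_iterate (f : α → α) (x : α) (k : ℕ) :
    EqvGen (fun a b => f a = b) x (f^[k] x) := by
  induction k with
  | zero => exact EqvGen.refl x
  | succ k ih => exact ih.trans _ _ _ (EqvGen.rel _ _ (iterate_succ_apply' f k x).symm)

theorem Function.Injective.exists_iterate_eq_of_eqvGen [Finite α] {f : α → α}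
    (hf : Injective f) {x y : α} (h : EqvGen (fun a b => f a = b) x y) : ∃ n, f^[n] x = y := by
  have hequiv : Equivalence fun x y => ∃ n, f^[n] x = y :=
    { refl := fun x => ⟨0, rfl⟩
      symm := by
        -- every point is periodic, so going back `n` steps is going forward `k * n - n` steps
        rintro x _ ⟨n, rfl⟩
        obtain ⟨k, hk, hper⟩ := hf.mem_periodicPts x
        refine ⟨k * n - n, ?_⟩
        rw [← iterate_add_apply, Nat.sub_add_cancel (Nat.le_mul_of_pos_left n hk),
          (hper.mul_const n).eq]
      trans := by
        rintro x _ _ ⟨m, rfl⟩ ⟨n, rfl⟩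
        exact ⟨n + m, iterate_add_apply f n m x⟩ }
  exact hequiv.eqvGen_iff.1 (h.mono fun a b hab => ⟨1, hab⟩)

theorem Function.Involutive.even_natCard [Finite α] {f : α → α} (hf : Involutive f)
    (hfix : ∀ x, f x ≠ x) : Even (Nat.card α) := by
  classical
  cases nonempty_fintype α
  have hsq : hf.toPerm f ^ 2 = 1 := by
    ext x
    simp [sq, hf x]
  have hsupp : (hf.toPerm f).support = Finset.univ := by
    ext x
    simp [Equiv.Perm.mem_support, hfix x]
  have hdvd := Equiv.Perm.two_dvd_card_support hsq
  rw [hsupp, Finset.card_univ] at hdvd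
  exact (Nat.card_eq_fintype_card (α := α)) ▸ even_iff_two_dvd.2 hdvd

theorem Nat.card_subtype_and_add_card_subtype_and_not [Finite α] (p q : α → Prop) :
    Nat.card {x // p x ∧ q x} + Nat.card {x // p x ∧ ¬q x} = Nat.card {x // p x} := by
  classical
  rw [← Nat.card_sum]
  exact Nat.card_congr ((Equiv.sumCongr (Equiv.subtypeSubtypeEquivSubtypeInter p q).symm
    (Equiv.subtypeSubtypeEquivSubtypeInter p _).symm).trans (Equiv.sumCompl _))

end

theorem opp_opp {E : FVDiagram} (h : HE E) : opp (opp h) = h := by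
  obtain ⟨a, i⟩ := h
  simp only [opp, Prod.mk.injEq, true_and]
  revert i; decide

theorem fst_opp {E : FVDiagram} (h : HE E) : (opp h).1 = h.1 := rfl

theorem exitSlot_of_ne_classical {E : FVDiagram} (s : State E) {h : HE E}
    (hc : E.kind h.1 ≠ VertexKind.classical) : exitSlot E s h = opp h := by
  simp [exitSlot, hc]

theorem smoothSlot_involutive (b : Bool) : Involutive (smoothSlot b) := by
  unfold Involutive; revert b; decide

theorem exitSlot_involutive (E : FVDiagram) (s : State E) : Involutive (exitSlot E s) := by
  intro h
  by_cases hc : E.kind h.1 = VertexKind.classical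
  · simp [exitSlot, hc, smoothSlot_involutive _ h.2]
  · rw [exitSlot_of_ne_classical s hc, exitSlot_of_ne_classical (h := opp h) s hc, opp_opp]

theorem travS_injective (E : FVDiagram) (s : State E) : Injective (travS E s) :=
  (Involutive.injective E.pair_invol).comp (exitSlot_involutive E s).injective

theorem trav_injective (E : FVDiagram) : Injective (trav E) :=
  (Involutive.injective E.pair_invol).comp (Involutive.injective (f := @opp E) opp_opp)

theorem travS_eq_trav_of_ne_classical {E : FVDiagram} (s : State E) {h : HE E}
    (hc : E.kind h.1 ≠ VertexKind.classical) : travS E s h = trav E h := by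
  rw [travS, exitSlot_of_ne_classical s hc, trav]

theorem trav_opp_trav (E : FVDiagram) (h : HE E) : trav E (opp (trav E h)) = opp h := by
  rw [trav, trav, opp_opp, E.pair_invol]

theorem dir_trav (E : FVDiagram) (h : HE E) : E.dir (trav E h) = E.dir h := by
  rw [trav, E.dir_pair, opp, E.dir_opp, Bool.not_not]

/-- Directed components of `D_s`: every component of `D_s` gives two elements, one for each
direction of traversal. -/
abbrev SmoothComp (E : FVDiagram) (s : State E) : Type := Quot fun x y : HE E => travS E s x = y

theorem SmoothComp.mk_eq_mk_iff {E : FVDiagram} {s : State E} {a b : HE E} :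
    (Quot.mk _ a : SmoothComp E s) = Quot.mk _ b ↔ ∃ n, (travS E s)^[n] a = b := by
  refine ⟨fun h => (travS_injective E s).exists_iterate_eq_of_eqvGen (Quot.eq.1 h), ?_⟩
  rintro ⟨n, rfl⟩
  exact Quot.eq.2 (eqvGen_iterate _ a n)

theorem SmoothComp.mk_travS {E : FVDiagram} {s : State E} (h : HE E) :
    (Quot.mk _ (travS E s h) : SmoothComp E s) = Quot.mk _ h :=
  (Quot.sound (r := fun x y : HE E => travS E s x = y) rfl).symm

theorem Skip.exists_iterate_travS {E : FVDiagram} {S : Set (Fin E.n)}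
    (hS : ∀ x ∈ S, E.kind x ≠ VertexKind.classical) (s : State E) {a b : HE E}
    (hab : Skip E S a b) :
    ∃ k, (travS E s)^[k] (E.pair a) = b ∧ ∀ j < k, ((travS E s)^[j] (E.pair a)).1 ∈ S := by
  induction hab with
  | base => exact ⟨0, rfl, fun j hj => absurd hj j.not_lt_zero⟩
  | step _ hmem ih =>
    obtain ⟨k, hk, hlt⟩ := ih
    refine ⟨k + 1, ?_, fun j hj => ?_⟩
    · rw [iterate_succ_apply', hk, travS_eq_trav_of_ne_classical s (hS _ hmem), trav]
    · rcases Nat.lt_succ_iff_lt_or_eq.1 hj with hj | rfl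
      · exact hlt j hj
      · rwa [hk]

def SmoothComp.MeetsOutside {E : FVDiagram} {s : State E} (S : Set (Fin E.n))
    (c : SmoothComp E s) : Prop :=
  ∃ h : HE E, Quot.mk _ h = c ∧ h.1 ∉ S

noncomputable def visitCount (E : FVDiagram) (s : State E) (S : Set (Fin E.n))
    (c : SmoothComp E s) : ℕ :=
  Nat.card {x : Fin E.n // x ∈ S ∧ ∃ i : Fin 4, Quot.mk _ (x, i) = c}

theorem flatCount_eq_add_visitCount {E : FVDiagram} {S : Set (Fin E.n)}
    (hS : ∀ x ∈ S, E.kind x = VertexKind.flat) (s : State E) (c : SmoothComp E s) :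
    flatCount E s c = Nat.card {x : Fin E.n //
      (E.kind x = VertexKind.flat ∧ ∃ i : Fin 4, Quot.mk _ (x, i) = c) ∧ x ∉ S} +
      visitCount E s S c := by
  rw [flatCount, visitCount, ← Nat.card_subtype_and_add_card_subtype_and_not _ (· ∉ S)]
  congr 1
  refine Nat.card_congr (Equiv.subtypeEquivRight fun x => ?_)
  by_cases hx : x ∈ S <;> simp [hx, hS]

theorem flatCount_eq_visitCount {E : FVDiagram} {S : Set (Fin E.n)}
    (hS : ∀ x ∈ S, E.kind x = VertexKind.flat) (s : State E) {c : SmoothComp E s}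
    (hc : ¬c.MeetsOutside S) : flatCount E s c = visitCount E s S c := by
  rw [flatCount_eq_add_visitCount hS, Nat.card_eq_zero.2 (Or.inl ⟨?_⟩), zero_add]
  rintro ⟨x, ⟨-, i, hi⟩, hx⟩
  exact hc ⟨(x, i), hi, hx⟩

theorem ne_classical_of_forall_flat {E : FVDiagram} {S : Set (Fin E.n)}
    (hS : ∀ x ∈ S, E.kind x = VertexKind.flat) :
    ∀ x ∈ S, E.kind x ≠ VertexKind.classical :=
  fun x hx => by rw [hS x hx]; decide

section Hidden

variable {E : FVDiagram} {S : Set (Fin E.n)}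

theorem iterate_trav_mem_closedIn {x : HE E} (hx : x ∈ ClosedIn E S) (m : ℕ) :
    (trav E)^[m] x ∈ ClosedIn E S := fun k => by
  rw [← iterate_add_apply]
  exact hx (k + m)

theorem iterate_trav_opp_iterate_trav (k : ℕ) (h : HE E) :
    (trav E)^[k] (opp ((trav E)^[k] h)) = opp h := by
  induction k with
  | zero => rfl
  | succ k ih => rw [iterate_succ_apply, iterate_succ_apply', trav_opp_trav, ih]

theorem opp_mem_closedIn {x : HE E} (hx : x ∈ ClosedIn E S) : opp x ∈ ClosedIn E S := by
  intro k
  have hsurj := Finite.surjective_of_injective ((trav_injective E).iterate k)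
  obtain ⟨y, rfl⟩ := hsurj x
  obtain ⟨m, hm⟩ := (trav_injective E).exists_iterate_eq_of_eqvGen
    (eqvGen_iterate (trav E) y k).symm
  rw [iterate_trav_opp_iterate_trav, fst_opp, ← hm]
  exact hx m

theorem iterate_travS_eq_iterate_trav (hS : ∀ x ∈ S, E.kind x ≠ VertexKind.classical)
    (s : State E) {x : HE E} {k : ℕ} (hx : ∀ j < k, ((trav E)^[j] x).1 ∈ S) :
    (travS E s)^[k] x = (trav E)^[k] x := by
  induction k with
  | zero => rfl
  | succ k ih =>
    rw [iterate_succ_apply', iterate_succ_apply', ih fun j hj => hx j (by omega),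
      travS_eq_trav_of_ne_classical s (hS _ (hx k k.lt_succ_self))]

theorem mem_closedIn_iff (hS : ∀ x ∈ S, E.kind x ≠ VertexKind.classical) (s : State E)
    (x : HE E) : x ∈ ClosedIn E S ↔ ∀ k, ((travS E s)^[k] x).1 ∈ S := by
  refine ⟨fun hx k => ?_, fun hx k => ?_⟩
  · rw [iterate_travS_eq_iterate_trav hS s fun j _ => hx j]
    exact hx k
  · induction k using Nat.strong_induction_on with
    | _ k ih => rw [← iterate_travS_eq_iterate_trav hS s ih]; exact hx k

/-- The quotient in the definition of `hiddenLoops`. -/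
abbrev HiddenComp (E : FVDiagram) (S : Set (Fin E.n)) : Type :=
  Quot fun h h' : ClosedIn E S => trav E h.1 = h'.1

theorem HiddenComp.mk_eq_mk_iterate (x : ClosedIn E S) (m : ℕ) :
    (Quot.mk _ x : HiddenComp E S) =
      Quot.mk _ ⟨(trav E)^[m] x.1, iterate_trav_mem_closedIn x.2 m⟩ := by
  induction m with
  | zero => rfl
  | succ m ih => exact ih.trans (Quot.sound (iterate_succ_apply' _ _ _).symm)

noncomputable def hiddenCompEquiv (hS : ∀ x ∈ S, E.kind x ≠ VertexKind.classical)
    (s : State E) : HiddenComp E S ≃ {c : SmoothComp E s // ¬c.MeetsOutside S} :=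
  Equiv.ofBijective
    (Quot.lift (fun x => ⟨Quot.mk _ x.1, fun ⟨h, hh, hhS⟩ => by
        obtain ⟨m, rfl⟩ := SmoothComp.mk_eq_mk_iff.1 hh.symm
        exact hhS ((mem_closedIn_iff hS s x.1).1 x.2 m)⟩)
      fun x _ hxy => Subtype.ext (Quot.sound <| by
        rw [travS_eq_trav_of_ne_classical s (hS _ (show x.1.1 ∈ S from x.2 0))]; exact hxy))
    ⟨fun c₁ c₂ hc => by
      induction c₁ using Quot.ind with | _ x => ?_
      induction c₂ using Quot.ind with | _ y => ?_
      obtain ⟨m, hm⟩ := SmoothComp.mk_eq_mk_iff.1 (congrArg Subtype.val hc)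
      rw [iterate_travS_eq_iterate_trav hS s fun j _ => x.2 j] at hm
      rw [HiddenComp.mk_eq_mk_iterate x m]
      exact congrArg _ (Subtype.ext hm),
    fun ⟨c, hc⟩ => by
      induction c using Quot.ind with | _ h => ?_
      have hclosed : h ∈ ClosedIn E S := (mem_closedIn_iff hS s h).2 fun k => by
        by_contra hk
        exact hc ⟨_, SmoothComp.mk_eq_mk_iff.2 ⟨k, rfl⟩ |>.symm, hk⟩
      exact ⟨Quot.mk _ ⟨h, hclosed⟩, rfl⟩⟩

/-- Reversing the direction of traversal is a fixed-point-free involution, since it flips the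
(class-invariant) direction of the half-edges. -/
theorem HiddenComp.even_natCard : Even (Nat.card (HiddenComp E S)) := by
  let rev : HiddenComp E S → HiddenComp E S :=
    Quot.lift (fun x => Quot.mk _ ⟨opp x.1, opp_mem_closedIn x.2⟩) fun x y hxy =>
      (Quot.sound (r := fun h h' : ClosedIn E S => trav E h.1 = h'.1)
        (a := ⟨opp y.1, opp_mem_closedIn y.2⟩) (b := ⟨opp x.1, opp_mem_closedIn x.2⟩)
        (show trav E (opp y.1) = opp x.1 by rw [← hxy]; exact trav_opp_trav E x.1)).symm
  let dir : HiddenComp E S → Bool :=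
    Quot.lift (fun x => E.dir x.1) fun x _ hxy => hxy ▸ (dir_trav E x.1).symm
  refine Involutive.even_natCard (f := rev) (fun c => ?_) (fun c hc => ?_)
  · induction c using Quot.ind with | _ x => exact congrArg _ (Subtype.ext (opp_opp x.1))
  · have hflip : dir (rev c) = !dir c := by
      induction c using Quot.ind with | _ x => exact E.dir_opp x.1
    rw [hc] at hflip
    cases h : dir c <;> simp [h] at hflip

theorem natCard_not_meetsOutside (hS : ∀ x ∈ S, E.kind x ≠ VertexKind.classical)
    (s : State E) : Nat.card {c : SmoothComp E s // ¬c.MeetsOutside S} = 2 * hiddenLoops E S := by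
  rw [← Nat.card_congr (hiddenCompEquiv hS s), hiddenLoops]
  exact (Nat.two_mul_div_two_of_even HiddenComp.even_natCard).symm

end Hidden

namespace RemovalIso

variable {D D' : FVDiagram} {S : Set (Fin D'.n)} (ι : RemovalIso D D' S)

def mapHE (h : HE D) : HE D' := (ι.toFun h.1, h.2)

theorem mapHE_injective : Injective ι.mapHE := by
  rintro ⟨a, i⟩ ⟨b, j⟩ hab
  simp only [mapHE, Prod.mk.injEq] at hab
  exact Prod.ext (ι.inj hab.1) hab.2

theorem exists_mapHE_eq {h' : HE D'} (hh' : h'.1 ∉ S) : ∃ h, ι.mapHE h = h' := by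
  obtain ⟨w, hw⟩ := ι.surj h'.1 hh'
  exact ⟨(w, h'.2), Prod.ext hw rfl⟩

theorem exitSlot_mapHE (s' : State D') (h : HE D) :
    exitSlot D' s' (ι.mapHE h) = ι.mapHE (exitSlot D (ι.pullState s') h) := by
  by_cases hc : D.kind h.1 = VertexKind.classical
  · have hc' : D'.kind (ι.toFun h.1) = VertexKind.classical := (ι.kind_eq h.1).trans hc
    simp [exitSlot, mapHE, hc, hc', pullState]
  · have hc' : D'.kind (ι.toFun h.1) ≠ VertexKind.classical := by rwa [ι.kind_eq]
    simp [exitSlot, mapHE, hc, hc', opp]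

theorem exists_iterate_travS_mapHE (hS : ∀ x ∈ S, D'.kind x ≠ VertexKind.classical)
    (s' : State D') (h : HE D) :
    ∃ k, 0 < k ∧ (travS D' s')^[k] (ι.mapHE h) = ι.mapHE (travS D (ι.pullState s') h) ∧
      ∀ j, 0 < j → j < k → ((travS D' s')^[j] (ι.mapHE h)).1 ∈ S := by
  obtain ⟨k, hk, hlt⟩ := (ι.conn (exitSlot D (ι.pullState s') h)).exists_iterate_travS hS s'
  have hstart : D'.pair (ι.mapHE (exitSlot D (ι.pullState s') h)) = travS D' s' (ι.mapHE h) := by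
    rw [travS, exitSlot_mapHE]
  rw [← mapHE, hstart] at hk hlt
  refine ⟨k + 1, k.succ_pos, by rwa [iterate_succ_apply], fun j hj hjk => ?_⟩
  obtain ⟨j, rfl⟩ := Nat.exists_eq_succ_of_ne_zero hj.ne'
  rw [iterate_succ_apply]
  exact hlt j (by omega)

theorem exists_iterate_eq_mapHE (hS : ∀ x ∈ S, D'.kind x ≠ VertexKind.classical)
    (s' : State D') (n : ℕ) (h : HE D) (hn : ((travS D' s')^[n] (ι.mapHE h)).1 ∉ S) :
    ∃ m, (travS D' s')^[n] (ι.mapHE h) = ι.mapHE ((travS D (ι.pullState s'))^[m] h) := by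
  induction n using Nat.strong_induction_on generalizing h with
  | _ n ih =>
    obtain ⟨k, hk0, hk, hlt⟩ := ι.exists_iterate_travS_mapHE hS s' h
    rcases lt_or_ge n k with hnk | hkn
    · rcases Nat.eq_zero_or_pos n with rfl | hn0
      · exact ⟨0, rfl⟩
      · exact absurd (hlt n hn0 hnk) hn
    · have hsplit : (travS D' s')^[n] (ι.mapHE h) =
          (travS D' s')^[n - k] (ι.mapHE (travS D (ι.pullState s') h)) := by
        rw [← hk, ← iterate_add_apply, Nat.sub_add_cancel hkn]
      rw [hsplit] at hn ⊢
      obtain ⟨m, hm⟩ := ih (n - k) (by omega) _ hn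
      exact ⟨m + 1, by rw [hm, iterate_succ_apply]⟩

theorem mk_mapHE_travS (hS : ∀ x ∈ S, D'.kind x ≠ VertexKind.classical) (s' : State D')
    (h : HE D) : (Quot.mk _ (ι.mapHE (travS D (ι.pullState s') h)) : SmoothComp D' s') =
      Quot.mk _ (ι.mapHE h) := by
  obtain ⟨k, -, hk, -⟩ := ι.exists_iterate_travS_mapHE hS s' h
  exact (SmoothComp.mk_eq_mk_iff.2 ⟨k, hk⟩).symm

theorem mk_mapHE_eq_mk_iff (hS : ∀ x ∈ S, D'.kind x ≠ VertexKind.classical) (s' : State D')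
    {h₁ h₂ : HE D} :
    (Quot.mk _ (ι.mapHE h₁) : SmoothComp D' s') = Quot.mk _ (ι.mapHE h₂) ↔
      (Quot.mk _ h₁ : SmoothComp D (ι.pullState s')) = Quot.mk _ h₂ := by
  refine ⟨fun h => ?_, fun h => ?_⟩
  · obtain ⟨n, hn⟩ := SmoothComp.mk_eq_mk_iff.1 h
    obtain ⟨m, hm⟩ := ι.exists_iterate_eq_mapHE hS s' n h₁ (hn ▸ ι.notMem h₂.1)
    rw [hn] at hm
    exact SmoothComp.mk_eq_mk_iff.2 ⟨m, (ι.mapHE_injective hm).symm⟩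
  · obtain ⟨n, rfl⟩ := SmoothComp.mk_eq_mk_iff.1 h
    clear h
    induction n with
    | zero => rfl
    | succ n ih => rw [iterate_succ_apply', ι.mk_mapHE_travS hS, ih]

noncomputable def equivCompl : Fin D.n ≃ {x : Fin D'.n // x ∉ S} :=
  Equiv.ofBijective (fun x => ⟨ι.toFun x, ι.notMem x⟩)
    ⟨fun _ _ h => ι.inj (congrArg Subtype.val h), fun x => by
      obtain ⟨y, hy⟩ := ι.surj x.1 x.2
      exact ⟨y, Subtype.ext hy⟩⟩

noncomputable def subtypeEquiv (P : Fin D'.n → Prop) :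
    {x : Fin D.n // P (ι.toFun x)} ≃ {x : Fin D'.n // P x ∧ x ∉ S} :=
  ((ι.equivCompl.subtypeEquiv fun _ => Iff.rfl).trans
    (Equiv.subtypeSubtypeEquivSubtypeInter (· ∉ S) P)).trans
    (Equiv.subtypeEquivRight fun _ => and_comm)

noncomputable def smoothCompEquiv (hS : ∀ x ∈ S, D'.kind x ≠ VertexKind.classical)
    (s' : State D') :
    SmoothComp D (ι.pullState s') ≃ {c : SmoothComp D' s' // c.MeetsOutside S} :=
  Equiv.ofBijective
    (Quot.lift (fun h => ⟨Quot.mk _ (ι.mapHE h), ι.mapHE h, rfl, ι.notMem h.1⟩)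
      fun h _ hh => Subtype.ext (hh ▸ ι.mk_mapHE_travS hS s' h).symm)
    ⟨fun c₁ c₂ hc => by
      induction c₁ using Quot.ind
      induction c₂ using Quot.ind
      exact (ι.mk_mapHE_eq_mk_iff hS s').1 (congrArg Subtype.val hc),
    fun ⟨c, h', hh', hS'⟩ => by
      obtain ⟨h, rfl⟩ := ι.exists_mapHE_eq hS'
      exact ⟨Quot.mk _ h, Subtype.ext hh'⟩⟩

theorem smoothCompEquiv_mk (hS : ∀ x ∈ S, D'.kind x ≠ VertexKind.classical) (s' : State D')
    (h : HE D) : (ι.smoothCompEquiv hS s' (Quot.mk _ h)).1 = Quot.mk _ (ι.mapHE h) :=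
  rfl

theorem natCard_flat_notMem_eq_flatCount (hS : ∀ x ∈ S, D'.kind x ≠ VertexKind.classical)
    (s' : State D') (h : HE D) :
    Nat.card {x : Fin D'.n // (D'.kind x = VertexKind.flat ∧
      ∃ i : Fin 4, Quot.mk _ (x, i) = (Quot.mk _ (ι.mapHE h) : SmoothComp D' s')) ∧ x ∉ S} =
      flatCount D (ι.pullState s') (Quot.mk _ h) := by
  rw [flatCount, ← Nat.card_congr (ι.subtypeEquiv _)]
  refine Nat.card_congr (Equiv.subtypeEquivRight fun x => ?_)
  rw [ι.kind_eq]
  exact and_congr_right fun _ => exists_congr fun i => ι.mk_mapHE_eq_mk_iff hS s' (h₁ := (x, i))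

theorem natCard_meetsOutside (hS : ∀ x ∈ S, D'.kind x ≠ VertexKind.classical)
    (s' : State D') (P : SmoothComp D' s' → Prop) :
    Nat.card {c : SmoothComp D (ι.pullState s') // P (ι.smoothCompEquiv hS s' c).1} =
      Nat.card {c : SmoothComp D' s' // P c ∧ c.MeetsOutside S} :=
  Nat.card_congr (((ι.smoothCompEquiv hS s').subtypeEquiv fun _ => Iff.rfl).trans
    ((Equiv.subtypeSubtypeEquivSubtypeInter _ P).trans
      (Equiv.subtypeEquivRight fun _ => and_comm)))

theorem even_flatCount_smoothCompEquiv (hS : ∀ x ∈ S, D'.kind x = VertexKind.flat)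
    (s' : State D') (hpar : ∀ c : SmoothComp D' s', Even (visitCount D' s' S c))
    (c : SmoothComp D (ι.pullState s')) :
    Even (flatCount D' s' (ι.smoothCompEquiv (ne_classical_of_forall_flat hS) s' c).1) ↔
      Even (flatCount D (ι.pullState s') c) := by
  induction c using Quot.ind with | _ h => ?_
  rw [smoothCompEquiv_mk, flatCount_eq_add_visitCount hS,
    ι.natCard_flat_notMem_eq_flatCount (ne_classical_of_forall_flat hS), Nat.even_add]
  exact iff_true_right (hpar _)

theorem gammas_pullState (hS : ∀ x ∈ S, D'.kind x = VertexKind.flat) (s' : State D')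
    (hpar : ∀ c : SmoothComp D' s', Even (visitCount D' s' S c)) :
    gammaEven D (ι.pullState s') = gammaEven D' s' ∧
      gammaOdd D (ι.pullState s') = gammaOdd D' s' := by
  have hS' := ne_classical_of_forall_flat hS
  have hvisible (P : ℕ → Prop) (hP : ∀ m n, (Even m ↔ Even n) → (P m ↔ P n)) :
      Nat.card {c : SmoothComp D (ι.pullState s') // P (flatCount D (ι.pullState s') c)} =
        Nat.card {c : SmoothComp D' s' // P (flatCount D' s' c) ∧ c.MeetsOutside S} := by
    rw [← ι.natCard_meetsOutside hS' s']
    exact Nat.card_congr (Equiv.subtypeEquivRight fun c =>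
      hP _ _ (ι.even_flatCount_smoothCompEquiv hS s' hpar c).symm)
  have hhidden_even : Nat.card {c : SmoothComp D' s' //
      Even (flatCount D' s' c) ∧ ¬c.MeetsOutside S} = 2 * hiddenLoops D' S := by
    rw [← natCard_not_meetsOutside hS' s']
    exact Nat.card_congr (Equiv.subtypeEquivRight fun c =>
      and_iff_right_of_imp fun hc => flatCount_eq_visitCount hS s' hc ▸ hpar c)
  have hhidden_odd : Nat.card {c : SmoothComp D' s' //
      ¬Even (flatCount D' s' c) ∧ ¬c.MeetsOutside S} = 0 :=
    Nat.card_eq_zero.2 (Or.inl ⟨fun ⟨c, hodd, hc⟩ =>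
      hodd (flatCount_eq_visitCount hS s' hc ▸ hpar c)⟩)
  have hEven := Nat.card_subtype_and_add_card_subtype_and_not
    (fun c : SmoothComp D' s' => Even (flatCount D' s' c)) (SmoothComp.MeetsOutside S)
  have hOdd := Nat.card_subtype_and_add_card_subtype_and_not
    (fun c : SmoothComp D' s' => ¬Even (flatCount D' s' c)) (SmoothComp.MeetsOutside S)
  rw [← hvisible Even fun _ _ => id, hhidden_even] at hEven
  rw [← hvisible (¬Even ·) fun _ _ => not_congr, hhidden_odd] at hOdd
  simp only [gammaEven, gammaOdd, ι.loops_eq]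
  dsimp only [SmoothComp] at hEven hOdd
  omega

noncomputable def classicalEquiv (hS : ∀ x ∈ S, D'.kind x ≠ VertexKind.classical) :
    {x : Fin D.n // D.kind x = VertexKind.classical} ≃
      {x : Fin D'.n // D'.kind x = VertexKind.classical} :=
  ((Equiv.subtypeEquivRight fun x => by rw [ι.kind_eq]).trans
    (ι.subtypeEquiv (D'.kind · = VertexKind.classical))).trans
    (Equiv.subtypeEquivRight fun x => and_iff_left_of_imp fun hx hxS => hS x hxS hx)

theorem alphaS_pullState (hS : ∀ x ∈ S, D'.kind x ≠ VertexKind.classical) (s' : State D') :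
    alphaS D (ι.pullState s') = alphaS D' s' :=
  Nat.card_congr ((ι.classicalEquiv hS).subtypeEquiv fun _ => Iff.rfl)

theorem betaS_pullState (hS : ∀ x ∈ S, D'.kind x ≠ VertexKind.classical) (s' : State D') :
    betaS D (ι.pullState s') = betaS D' s' :=
  Nat.card_congr ((ι.classicalEquiv hS).subtypeEquiv fun _ => Iff.rfl)

end RemovalIso

theorem writhe_eq_of_removalIso {D D' : FVDiagram} {S : Set (Fin D'.n)} (ι : RemovalIso D D' S)
    (hS : ∀ x ∈ S, D'.kind x ≠ VertexKind.classical) : writhe D = writhe D' := by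
  rw [writhe, writhe, Finset.sum_subtype _ (fun _ => Finset.mem_filter_univ _),
    Finset.sum_subtype _ (fun _ => Finset.mem_filter_univ _)]
  refine Fintype.sum_equiv (ι.classicalEquiv hS) _ _ fun c => ?_
  simp only [crossSign]
  rw [← ι.dir_eq c.1 0, ← ι.dir_eq c.1 1]
  rfl

theorem Xpoly_eq_of_removalIso {D D' : FVDiagram} {S : Set (Fin D'.n)} (ι : RemovalIso D D' S)
    (hS : ∀ x ∈ S, D'.kind x = VertexKind.flat)
    (hpar : ∀ (s' : State D') (c : SmoothComp D' s'), Even (visitCount D' s' S c)) :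
    Xpoly D = Xpoly D' := by
  have hS' := ne_classical_of_forall_flat hS
  rw [Xpoly, Xpoly, writhe_eq_of_removalIso ι hS']
  congr 1
  refine (Fintype.sum_equiv ((ι.classicalEquiv hS').symm.arrowCongr (Equiv.refl Bool)) _ _
    fun s' => ?_).symm
  change _ = Av (alphaS D (ι.pullState s') - betaS D (ι.pullState s')) *
    (-Av 2 - Av (-2)) ^ gammaEven D (ι.pullState s') * bv ^ gammaOdd D (ι.pullState s')
  rw [ι.alphaS_pullState hS', ι.betaS_pullState hS', (ι.gammas_pullState hS s' (hpar s')).1,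
    (ι.gammas_pullState hS s' (hpar s')).2]

section Bigon

variable {E : FVDiagram} {u v : Fin E.n} {p q : Fin 4}

theorem mk_eq_mk_pair_opp_of_flat (s : State E) {h : HE E} (hf : E.kind h.1 = VertexKind.flat) :
    (Quot.mk _ h : SmoothComp E s) = Quot.mk _ (E.pair (opp h)) := by
  rw [← SmoothComp.mk_travS, travS_eq_trav_of_ne_classical s (by rw [hf]; decide), trav]

theorem mk_opp_pair_eq_of_flat (s : State E) {h : HE E}
    (hf : E.kind (E.pair h).1 = VertexKind.flat) :
    (Quot.mk _ (opp (E.pair h)) : SmoothComp E s) = Quot.mk _ h := by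
  rw [mk_eq_mk_pair_opp_of_flat (h := opp (E.pair h)) s hf, opp_opp, E.pair_invol]

/-- The slots `(u, p)` and `(v, q)` are joined by one side of a bigon whose other side joins
the neighbouring slots on the same side (`p + 1` with `q - 1`, or `p - 1` with `q + 1`). -/
def IsBigon (E : FVDiagram) (u v : Fin E.n) (p q : Fin 4) : Prop :=
  E.pair (u, p) = (v, q) ∧ (E.pair (u, p + 1) = (v, q + 3) ∨ E.pair (u, p + 3) = (v, q + 1))

theorem IsBigon.symm (hb : IsBigon E u v p q) : IsBigon E v u q p := by
  obtain ⟨hpq, hside | hside⟩ := hb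
  all_goals refine ⟨by rw [← hpq, E.pair_invol], ?_⟩
  · exact Or.inr (by rw [← hside, E.pair_invol])
  · exact Or.inl (by rw [← hside, E.pair_invol])

theorem IsBigon.pair_fst_eq (hb : IsBigon E u v p q) (i : Fin 4) :
    (E.pair (u, i)).1 = v ∨ (E.pair (u, i + 2)).1 = v := by
  obtain ⟨hpq, hside | hside⟩ := hb <;>
  obtain ⟨k, rfl⟩ : ∃ k, i = p + k := ⟨i - p, by abel⟩ <;>
  fin_cases k <;>
  simp [add_assoc, hpq, hside, show (1 + 2 : Fin 4) = 3 from rfl, show (2 + 2 : Fin 4) = 0 from rfl,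
    show (3 + 2 : Fin 4) = 1 from rfl]

theorem IsBigon.exists_mk_eq (hku : E.kind u = VertexKind.flat)
    (hkv : E.kind v = VertexKind.flat) (hb : IsBigon E u v p q) (s : State E) (i : Fin 4) :
    ∃ j, (Quot.mk _ (u, i) : SmoothComp E s) = Quot.mk _ (v, j) := by
  rcases hb.pair_fst_eq i with hv | hv
  · refine ⟨(E.pair (u, i)).2 + 2, ?_⟩
    rw [← mk_opp_pair_eq_of_flat s (hv ▸ hkv)]
    exact congrArg _ (Prod.ext hv rfl)
  · refine ⟨(E.pair (u, i + 2)).2, ?_⟩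
    rw [mk_eq_mk_pair_opp_of_flat s hku]
    exact congrArg _ (Prod.ext hv rfl)

theorem IsBigon.even_visitCount (huv : u ≠ v) (hku : E.kind u = VertexKind.flat)
    (hkv : E.kind v = VertexKind.flat) (hb : IsBigon E u v p q) (s : State E)
    (c : SmoothComp E s) : Even (visitCount E s {u, v} c) := by
  have hiff : (∃ i, (Quot.mk _ (u, i) : SmoothComp E s) = c) ↔ ∃ j, Quot.mk _ (v, j) = c :=
    ⟨fun ⟨i, hi⟩ => (hb.exists_mk_eq hku hkv s i).imp fun _ hj => hj.symm.trans hi,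
      fun ⟨j, hj⟩ => (hb.symm.exists_mk_eq hkv hku s j).imp fun _ hi => hi.symm.trans hj⟩
  by_cases hu : ∃ i, (Quot.mk _ (u, i) : SmoothComp E s) = c
  · have hcard : visitCount E s {u, v} c = Nat.card ({u, v} : Set (Fin E.n)) := by
      refine Nat.card_congr (Equiv.subtypeEquivRight fun x => and_iff_left_of_imp ?_)
      rintro (rfl | rfl)
      exacts [hu, hiff.1 hu]
    rw [hcard, Nat.card_coe_set_eq, Set.ncard_pair huv]
    exact even_two
  · have hcard : visitCount E s {u, v} c = 0 := by
      refine Nat.card_eq_zero.2 (Or.inl ⟨?_⟩)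
      rintro ⟨x, rfl | rfl, hx⟩
      exacts [hu hx, hu (hiff.2 hx)]
    rw [hcard]
    exact Even.zero

end Bigon

/-- If two oriented flat-virtual link diagrams differ by a flat second Reidemeister move
then `X(D) = X(D')`.  Specifically, the move changes by `2` the number of flat crossings
on one or two components of each smoothed diagram `D_s`, so the parity of the number of
flat crossings on each component is unchanged and the state-sum expressions coincide:
for every state the numbers `γ_even` and `γ_odd` of the two smoothed diagrams agree. -/
theorem Xpoly_flat_second_Reidemeister :
    (∀ D D' : FVDiagram, MoveFlatR2 D D' ∨ MoveFlatR2 D' D → Xpoly D = Xpoly D') ∧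
    (∀ (D D' : FVDiagram) (u v : Fin D'.n), u ≠ v →
      D'.kind u = VertexKind.flat → D'.kind v = VertexKind.flat →
      (∃ p q : Fin 4, D'.pair (u, p) = (v, q) ∧
        (D'.pair (u, p + 1) = (v, q + 3) ∨ D'.pair (u, p + 3) = (v, q + 1))) →
      ∀ (ι : RemovalIso D D' {u, v}) (s' : State D'),
        gammaEven D (ι.pullState s') = gammaEven D' s' ∧
        gammaOdd D (ι.pullState s') = gammaOdd D' s') := by
  have hflat {E : FVDiagram} {u v : Fin E.n} (hku : E.kind u = VertexKind.flat)
      (hkv : E.kind v = VertexKind.flat) : ∀ x ∈ ({u, v} : Set (Fin E.n)),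
      E.kind x = VertexKind.flat := by
    rintro x (rfl | rfl) <;> assumption
  have hmove {D D' : FVDiagram} (h : MoveFlatR2 D D') : Xpoly D = Xpoly D' := by
    obtain ⟨u, v, huv, hku, hkv, ⟨p, q, hb⟩, ⟨ι⟩⟩ := h
    exact Xpoly_eq_of_removalIso ι (hflat hku hkv)
      fun s' => IsBigon.even_visitCount huv hku hkv hb s'
  refine ⟨fun D D' h => h.elim hmove fun h => (hmove h).symm, ?_⟩
  rintro D D' u v huv hku hkv ⟨p, q, hb⟩ ι s'
  exact ι.gammas_pullState (hflat hku hkv) s' (IsBigon.even_visitCount huv hku hkv hb s')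
end

section
/- For the flat-virtual knot diagram W obtained from the non-trivial component of the Whitehead link in the full torus via φ_2 (a diagram with two classical crossings and two flat crossings), the flat-virtual Jones polynomial equals X(W) = (−a)^{−6}[a²(−a²−a^{−2})b² + 2b² + a^{−2}(−a²−a^{−2})] = (a^{−6} − a^{−2})b² − a^{−10} − a^{−6}. -/
/-! ### The flat-virtual knot `W` obtained from the Whitehead link

`W` is the flat-virtual knot diagram obtained by the map `φ₂` from the diagram in the
full torus of the non-trivial component of the Whitehead link: it has two classical
crossings (both of writhe `+1`) and two flat crossings, and its Gauss sequence is
`C₀ F₃ F₃ C₀ C₁ F₂ F₂ C₁`. -/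

/-- The edge matching of the diagram `W` (crossings `0`, `1` classical, `2`, `3` flat). -/
def Wpair : Fin 4 × Fin 4 → Fin 4 × Fin 4 := fun h =>
  ![![((1 : Fin 4), (3 : Fin 4)), (3, 3), (3, 0), (1, 0)],
    ![(0, 3), (2, 3), (2, 0), (0, 0)],
    ![(1, 2), (2, 2), (2, 1), (1, 1)],
    ![(0, 2), (3, 2), (3, 1), (0, 1)]] h.1 h.2

/-- The flat-virtual knot diagram `W` obtained from the non-trivial component of the
Whitehead link in the full torus via `φ₂`. -/
def Wdiag : FVDiagram where
  n := 4
  loops := 0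
  kind := ![VertexKind.classical, VertexKind.classical, VertexKind.flat, VertexKind.flat]
  pair := Wpair
  pair_invol := by decide
  pair_ne := by decide
  dir := fun h => decide (2 ≤ (h.2 : ℕ))
  dir_pair := by decide
  dir_opp := by decide

/-- The trivial flat-virtual knot diagram: a single circle with no crossings. -/
def unknotDiag : FVDiagram where
  n := 0
  loops := 1
  kind := fun v => v.elim0
  pair := fun h => h.1.elim0
  pair_invol := fun h => h.1.elim0
  pair_ne := fun h => h.1.elim0
  dir := fun h => h.1.elim0
  dir_pair := fun h => h.1.elim0
  dir_opp := fun h => h.1.elim0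

/-! The components of a smoothing `D_s` are the orbits of the traversal `travS D s`, an injective
map on the finite set of half-edges; so each component is determined by its orbit as a finset,
which is computable. This turns `α`, `β`, `γ_even` and `γ_odd` into finite counts, evaluated for
the four states of `W` by kernel computation; what remains is an identity of Laurent
polynomials. -/

open Finset Function

section Orbits

variable {α : Type*}

lemma quot_mk_iterate (f : α → α) (n : ℕ) (x : α) :
    Quot.mk (fun x y => f x = y) (f^[n] x) = Quot.mk _ x := by
  induction n with
  | zero => rfl
  | succ n ih =>
    rw [iterate_succ_apply', ← ih]
    exact (Quot.sound (r := fun x y => f x = y) rfl).symm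

variable [Fintype α] [DecidableEq α] {f : α → α}

def orbitFinset (f : α → α) (x : α) : Finset α :=
  (range (Fintype.card α)).image (f^[·] x)

def orbits (f : α → α) : Finset (Finset α) :=
  univ.image (orbitFinset f)

lemma mem_orbitFinset_iff (hf : Injective f) {x y : α} :
    y ∈ orbitFinset f x ↔ ∃ n, f^[n] x = y := by
  refine ⟨fun hy => ?_, fun ⟨n, hn⟩ => ?_⟩
  · obtain ⟨n, -, hn⟩ := mem_image.1 hy
    exact ⟨n, hn⟩
  · have hpos := minimalPeriod_pos_of_mem_periodicPts (hf.mem_periodicPts x)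
    have hlt : n % minimalPeriod f x < Fintype.card α :=
      (Nat.mod_lt n hpos).trans_le minimalPeriod_le_card
    exact mem_image.2 ⟨_, mem_range.2 hlt, by rw [iterate_mod_minimalPeriod_eq, hn]⟩

lemma orbitFinset_apply (hf : Injective f) (x : α) : orbitFinset f (f x) = orbitFinset f x := by
  ext y
  simp only [mem_orbitFinset_iff hf, ← iterate_succ_apply]
  refine ⟨fun ⟨n, hn⟩ => ⟨n + 1, hn⟩, fun ⟨n, hn⟩ => ?_⟩
  have hpos := minimalPeriod_pos_of_mem_periodicPts (hf.mem_periodicPts x)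
  refine ⟨n + minimalPeriod f x - 1, ?_⟩
  rw [Nat.succ_eq_add_one, Nat.sub_add_cancel (by omega), iterate_add_apply,
    iterate_minimalPeriod, hn]

lemma orbitFinset_eq_iff_mem (hf : Injective f) {x y : α} :
    orbitFinset f y = orbitFinset f x ↔ y ∈ orbitFinset f x := by
  refine ⟨fun h => h ▸ (mem_orbitFinset_iff hf).2 ⟨0, rfl⟩, fun hy => ?_⟩
  obtain ⟨n, rfl⟩ := (mem_orbitFinset_iff hf).1 hy
  clear hy
  induction n with
  | zero => rfl
  | succ n ih => rw [iterate_succ_apply', orbitFinset_apply hf, ih]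

lemma quot_mk_eq_mk_iff (hf : Injective f) {x y : α} :
    Quot.mk (fun x y => f x = y) y = Quot.mk _ x ↔ y ∈ orbitFinset f x := by
  refine ⟨fun h => ?_, fun hy => ?_⟩
  · rw [← orbitFinset_eq_iff_mem hf]
    exact congrArg (Quot.lift (r := fun x y => f x = y) (orbitFinset f) fun _ _ h => by
      subst h; exact (orbitFinset_apply hf _).symm) h
  · obtain ⟨n, rfl⟩ := (mem_orbitFinset_iff hf).1 hy
    exact quot_mk_iterate f n x

noncomputable def Function.Injective.orbitQuotEquiv (hf : Injective f) :
    (Quot fun x y => f x = y) ≃ orbits f :=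
  Equiv.ofBijective
    (Quot.lift (fun x => ⟨orbitFinset f x, mem_image_of_mem _ (mem_univ x)⟩)
      fun _ _ h => by subst h; exact Subtype.ext (orbitFinset_apply hf _).symm)
    ⟨by
      rintro ⟨x⟩ ⟨y⟩ h
      exact (quot_mk_eq_mk_iff hf).2 ((orbitFinset_eq_iff_mem hf).1 (congrArg Subtype.val h)),
     by
      rintro ⟨o, ho⟩
      obtain ⟨x, -, rfl⟩ := mem_image.1 ho
      exact ⟨Quot.mk _ x, rfl⟩⟩

lemma card_quot_subtype_eq (hf : Injective f) (P : (Quot fun x y => f x = y) → Prop)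
    (Q : Finset α → Prop) [DecidablePred Q]
    (hPQ : ∀ x, P (Quot.mk _ x) ↔ Q (orbitFinset f x)) :
    Nat.card {q // P q} = #{o ∈ orbits f | Q o} := by
  rw [← Nat.card_eq_finsetCard]
  refine Nat.card_congr ((hf.orbitQuotEquiv.subtypeEquiv (q := fun o => Q o.1) ?_).trans
    ((Equiv.subtypeSubtypeEquivSubtypeInter _ Q).trans (Equiv.subtypeEquivRight fun o => ?_)))
  · exact Quot.ind hPQ
  · exact mem_filter.symm

end Orbits

section Smoothing

variable (D : FVDiagram) (s : State D)

lemma exitSlot_involutive_s9 : Involutive (exitSlot D s) := by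
  intro h
  by_cases hc : D.kind h.1 = VertexKind.classical
  · have hinv : ∀ b i, smoothSlot b (smoothSlot b i) = i := by decide
    simp [exitSlot, hc, hinv]
  · have hopp : ∀ i : Fin 4, i + 2 + 2 = i := by decide
    simp [exitSlot, hc, opp, hopp]

lemma travS_injective_s9 : Injective (travS D s) :=
  (LeftInverse.injective D.pair_invol).comp (exitSlot_involutive_s9 D s).injective

def flatCountOn (o : Finset (HE D)) : ℕ :=
  #{v | D.kind v = VertexKind.flat ∧ ∃ i, (v, i) ∈ o}

lemma flatCount_mk (x : HE D) :
    flatCount D s (Quot.mk _ x) = flatCountOn D (orbitFinset (travS D s) x) := by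
  rw [flatCount, flatCountOn, ← Nat.card_eq_finsetCard]
  exact Nat.card_congr (Equiv.subtypeEquivRight fun v => by
    simp only [quot_mk_eq_mk_iff (travS_injective_s9 D s), mem_filter, mem_univ, true_and])

lemma gammaEven_eq :
    gammaEven D s = #{o ∈ orbits (travS D s) | Even (flatCountOn D o)} / 2 + D.loops := by
  rw [gammaEven, card_quot_subtype_eq (travS_injective_s9 D s) _ (fun o => Even (flatCountOn D o))
    fun x => by rw [flatCount_mk]]

lemma gammaOdd_eq :
    gammaOdd D s = #{o ∈ orbits (travS D s) | ¬ Even (flatCountOn D o)} / 2 := by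
  rw [gammaOdd, card_quot_subtype_eq (travS_injective_s9 D s) _ (fun o => ¬ Even (flatCountOn D o))
    fun x => by rw [flatCount_mk]]

lemma alphaS_eq : alphaS D s = #{c | s c = false} :=
  Nat.card_eq_fintype_card.trans (Fintype.card_subtype _)

lemma betaS_eq : betaS D s = #{c | s c = true} :=
  Nat.card_eq_fintype_card.trans (Fintype.card_subtype _)

end Smoothing

structure StateStats where
  alpha : ℕ
  beta : ℕ
  gammaEven : ℕ
  gammaOdd : ℕ
  deriving DecidableEq

noncomputable def StateStats.weight (t : StateStats) : LPRing :=
  Av ((t.alpha : ℤ) - t.beta) * (-Av 2 - Av (-2)) ^ t.gammaEven * bv ^ t.gammaOdd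

def stateStats (D : FVDiagram) (s : State D) : StateStats where
  alpha := #{c | s c = false}
  beta := #{c | s c = true}
  gammaEven := #{o ∈ orbits (travS D s) | Even (flatCountOn D o)} / 2 + D.loops
  gammaOdd := #{o ∈ orbits (travS D s) | ¬ Even (flatCountOn D o)} / 2

lemma Xpoly_eq_sum_stateStats (D : FVDiagram) :
    Xpoly D = ((((-3 * writhe D).negOnePow : ℤˣ) : ℤ) • Av (-3 * writhe D)) *
      ((univ.val.map (stateStats D)).map StateStats.weight).sum := by
  rw [Xpoly, Multiset.map_map, ← Finset.sum_eq_multiset_sum]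
  refine congrArg _ (Finset.sum_congr rfl fun s _ => ?_)
  rw [comp_apply, StateStats.weight, alphaS_eq, betaS_eq, gammaEven_eq, gammaOdd_eq]
  rfl

lemma Av_add (m n : ℤ) : Av (m + n) = Av m * Av n := by
  rw [Av, Av, Av, LaurentPolynomial.T_add, Polynomial.C_mul]

lemma Av_zero : Av 0 = 1 := by
  rw [Av, LaurentPolynomial.T_zero, Polynomial.C_1]

lemma writhe_Wdiag : writhe Wdiag = 2 := by decide

lemma stateStats_Wdiag : univ.val.map (stateStats Wdiag) =
    {⟨2, 0, 1, 2⟩, ⟨1, 1, 0, 2⟩, ⟨1, 1, 0, 2⟩, ⟨0, 2, 1, 0⟩} := by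
  decide +kernel

/-- For the flat-virtual knot diagram `W` obtained from the non-trivial component of the
Whitehead link in the full torus via `φ₂` (two classical crossings of writhe `+1` each
and two flat crossings), the flat-virtual Jones polynomial equals
`X(W) = (−a)⁻⁶ [a²(−a²−a⁻²)b² + 2b² + a⁻²(−a²−a⁻²)] = (a⁻⁶ − a⁻²)b² − a⁻¹⁰ − a⁻⁶`. -/
theorem Xpoly_Whitehead_knot :
    Xpoly Wdiag =
      Av (-6) *
        (Av 2 * (-Av 2 - Av (-2)) * bv ^ 2 + 2 * bv ^ 2 + Av (-2) * (-Av 2 - Av (-2))) ∧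
    Xpoly Wdiag = (Av (-6) - Av (-2)) * bv ^ 2 - Av (-10) - Av (-6) := by
  have hX : Xpoly Wdiag = Av (-6) *
      (Av 2 * (-Av 2 - Av (-2)) * bv ^ 2 + 2 * bv ^ 2 + Av (-2) * (-Av 2 - Av (-2))) := by
    have hsign : (((-3 * 2 : ℤ).negOnePow : ℤˣ) : ℤ) = 1 := by decide
    rw [Xpoly_eq_sum_stateStats, writhe_Wdiag, stateStats_Wdiag, hsign, one_smul]
    simp only [Multiset.insert_eq_cons, Multiset.map_cons, Multiset.map_singleton,
      Multiset.sum_cons, Multiset.sum_singleton, StateStats.weight]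
    norm_num only [Av_zero]
    ring
  refine ⟨hX, ?_⟩
  have h₁ : Av (-6) * Av 2 * Av 2 = Av (-2) := by simp only [← Av_add]; norm_num
  have h₂ : Av (-6) * Av 2 * Av (-2) = Av (-6) := by simp only [← Av_add]; norm_num
  have h₃ : Av (-6) * Av (-2) * Av (-2) = Av (-10) := by simp only [← Av_add]; norm_num
  rw [hX]
  linear_combination (-bv ^ 2) * h₁ + (-bv ^ 2 - 1) * h₂ - h₃
end
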